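/- arXiv:2504.00386 — 2 statements merged into one kernel-verified Lean document; each statement's English description precedes it below -/
import Mathlib

section
/- Let v be a real number with |v| < 1, let γ = 1/√(1 − v²), and let x₀ be a real number. Then the kink soliton φ(x,t) = 4·arctan(exp(γ(x − v t − x₀))) satisfies the sine-Gordon equation ∂²φ/∂t² − ∂²φ/∂x² + sin φ = 0 for all real x and t. -/
/-- Second partial derivative in time of a function of (x, t). -/
noncomputable def dtt (f : ℝ → ℝ → ℝ) (x t : ℝ) : ℝ :=
  deriv (fun s => deriv (fun s' => f x s') s) t

/-- Second partial derivative in space of a function of (x, t). -/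
noncomputable def dxx (f : ℝ → ℝ → ℝ) (x t : ℝ) : ℝ :=
  deriv (fun y => deriv (fun y' => f y' t) y) x

/-!
The profile `F u = 4 arctan (exp u)` solves the stationary equation `F'' = sin F`: with
`θ = arctan (exp u)` both sides equal `2 sin 2θ cos 2θ`. Since `γ² (1 - v²) = 1`, the boosted
wave `F (γ (x - v t - x₀))` has `φ_tt - φ_xx = γ² (v² - 1) F'' = -F'' = -sin φ`.
-/

open Real

section AffineChainRule

variable {𝕜 E : Type*} [NontriviallyNormedField 𝕜] [NormedAddCommGroup E] [NormedSpace 𝕜 E]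

theorem deriv_comp_mul_add (f : 𝕜 → E) (c a x : 𝕜) :
    deriv (fun s => f (c * s + a)) x = c • deriv f (c * x + a) := by
  rw [deriv_comp_mul_left c (fun y => f (y + a)) x, deriv_comp_add_const]

theorem deriv_deriv_comp_mul_add (f : 𝕜 → E) (c a x : 𝕜) :
    deriv (fun s => deriv (fun s' => f (c * s' + a)) s) x
      = c ^ 2 • deriv (deriv f) (c * x + a) := by
  simp only [deriv_comp_mul_add, deriv_fun_const_smul_field, pow_two, mul_smul]

end AffineChainRule

section TravelingWave

variable (F : ℝ → ℝ) (γ v x₀ x t : ℝ)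

theorem dtt_travelingWave :
    dtt (fun x t => F (γ * (x - v * t - x₀))) x t
      = (γ * v) ^ 2 * deriv (deriv F) (γ * (x - v * t - x₀)) := by
  have hwave (s : ℝ) : γ * (x - v * s - x₀) = -(γ * v) * s + γ * (x - x₀) := by ring
  simp only [dtt, hwave, deriv_deriv_comp_mul_add, smul_eq_mul, neg_sq]

theorem dxx_travelingWave :
    dxx (fun x t => F (γ * (x - v * t - x₀))) x t
      = γ ^ 2 * deriv (deriv F) (γ * (x - v * t - x₀)) := by
  have hwave (y : ℝ) : γ * (y - v * t - x₀) = γ * y + -(γ * (v * t + x₀)) := by ring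
  simp only [dxx, hwave, deriv_deriv_comp_mul_add, smul_eq_mul]

theorem sineGordon_travelingWave (hF : ∀ u, deriv (deriv F) u = sin (F u))
    (hγ : γ ^ 2 * (1 - v ^ 2) = 1) :
    dtt (fun x t => F (γ * (x - v * t - x₀))) x t
      - dxx (fun x t => F (γ * (x - v * t - x₀))) x t
      + sin (F (γ * (x - v * t - x₀))) = 0 := by
  rw [dtt_travelingWave, dxx_travelingWave, ← hF]
  linear_combination (-deriv (deriv F) (γ * (x - v * t - x₀))) * hγ

end TravelingWave

theorem sin_two_mul_arctan (y : ℝ) : sin (2 * arctan y) = 2 * y / (1 + y ^ 2) := by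
  have hsqrt : √(1 + y ^ 2) * √(1 + y ^ 2) = 1 + y ^ 2 := Real.mul_self_sqrt (by positivity)
  rw [sin_two_mul, sin_arctan, cos_arctan, mul_assoc, div_mul_div_comm, mul_one, hsqrt,
    mul_div_assoc]

theorem cos_two_mul_arctan (y : ℝ) : cos (2 * arctan y) = (1 - y ^ 2) / (1 + y ^ 2) := by
  rw [cos_two_mul, cos_sq_arctan]
  field_simp
  ring

noncomputable def kinkProfile (u : ℝ) : ℝ := 4 * arctan (exp u)

theorem hasDerivAt_kinkProfile (u : ℝ) :
    HasDerivAt kinkProfile (4 * exp u / (1 + exp u ^ 2)) u := by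
  have h := ((hasDerivAt_arctan (exp u)).comp u (hasDerivAt_exp u)).const_mul 4
  exact h.congr_deriv (by ring)

theorem deriv_kinkProfile : deriv kinkProfile = fun u => 4 * exp u / (1 + exp u ^ 2) :=
  funext fun u => (hasDerivAt_kinkProfile u).deriv

theorem sin_kinkProfile (u : ℝ) :
    sin (kinkProfile u) = 4 * exp u * (1 - exp u ^ 2) / (1 + exp u ^ 2) ^ 2 := by
  rw [kinkProfile, show 4 * arctan (exp u) = 2 * (2 * arctan (exp u)) by ring, sin_two_mul,
    sin_two_mul_arctan, cos_two_mul_arctan]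
  field_simp
  ring

theorem deriv_deriv_kinkProfile (u : ℝ) : deriv (deriv kinkProfile) u = sin (kinkProfile u) := by
  have hden : 1 + exp u ^ 2 ≠ 0 := by positivity
  have h : HasDerivAt (fun u => 4 * exp u / (1 + exp u ^ 2)) _ u :=
    ((hasDerivAt_exp u).const_mul 4).div (((hasDerivAt_exp u).pow 2).const_add 1) hden
  rw [deriv_kinkProfile, h.deriv, sin_kinkProfile]
  field_simp
  ring

theorem lorentzFactor_sq_mul {v : ℝ} (hv : |v| < 1) :
    (1 / √(1 - v ^ 2)) ^ 2 * (1 - v ^ 2) = 1 := by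
  have hpos : 0 < 1 - v ^ 2 := sub_pos.mpr (sq_lt_one_iff_abs_lt_one v |>.mpr hv)
  rw [div_pow, one_pow, sq_sqrt hpos.le, one_div_mul_cancel hpos.ne']

/-- The kink soliton `φ(x,t) = 4 arctan (exp (γ (x − v t − x₀)))` with `|v| < 1`,
`γ = 1/√(1 − v²)`, satisfies the sine-Gordon equation
`φ_tt − φ_xx + sin φ = 0` for all real `x` and `t`. -/
theorem kink_satisfies_sineGordon (v γ x₀ : ℝ) (hv : |v| < 1)
    (hγ : γ = 1 / Real.sqrt (1 - v ^ 2))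
    (φ : ℝ → ℝ → ℝ)
    (hφ : ∀ x t, φ x t = 4 * Real.arctan (Real.exp (γ * (x - v * t - x₀)))) :
    ∀ x t : ℝ, dtt φ x t - dxx φ x t + Real.sin (φ x t) = 0 := by
  obtain rfl : φ = fun x t => kinkProfile (γ * (x - v * t - x₀)) := funext₂ hφ
  subst hγ
  intro x t
  exact sineGordon_travelingWave kinkProfile _ v x₀ x t deriv_deriv_kinkProfile
    (lorentzFactor_sq_mul hv)
end

section
/- Let L > 0, T > 0, ε ∈ (0,1], let φ : [−L,L] × [0,T] → ℝ be continuous, and let g : [−L,L] × [0,T] → ℝ be continuous. Let η be a twice continuously differentiable solution on [−L,L] × [0,T] of η_tt − η_xx + ε⁻¹(sin(φ + ε η) − sin φ) = g with boundary conditions η_x(−L,t) = η_x(L,t) = 0 (or η(−L,t) = η(L,t) = 0) and initial data η(x,0) = u₀(x), η_t(x,0) = v₀(x). Then there exists a constant c depending only on T such that for all t ∈ [0,T]: ∫_{−L}^{L} η_t(x,t)² dx + ∫_{−L}^{L} (η(x,t)² + η_x(x,t)²) dx ≤ c ( ∫_{−L}^{L} v₀(x)² dx + ∫_{−L}^{L}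 (u₀(x)² + u₀'(x)²) dx + ∫_0^t ∫_{−L}^{L} g(x,s)² dx ds ). -/
/-!
Let `E(t) = ∫ η_t² + ∫ (η² + η_x²)`. Using the equation to replace `η_tt` and integrating
`η_t η_xx + η_x η_xt = (η_t η_x)_x` over `[-L, L]`, the boundary term vanishes under either
boundary condition, leaving `E' = ∫ 2 η_t (η + g - N)` with
`N = ε⁻¹ (sin (φ + ε η) - sin φ)`. Since `sin` is 1-Lipschitz, `N² ≤ η²`, so
`E' ≤ 3 E + ∫ g²`, and Gronwall's inequality gives `E(t) ≤ e^{3T} (E(0) + ∫₀ᵗ ∫ g²)`.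
-/

open Set

/-- Partial derivative in time of a function of (x, t). -/
noncomputable def pdt (f : ℝ → ℝ → ℝ) (x t : ℝ) : ℝ := deriv (fun s => f x s) t

/-- Partial derivative in space of a function of (x, t). -/
noncomputable def pdx (f : ℝ → ℝ → ℝ) (x t : ℝ) : ℝ := deriv (fun y => f y t) x

open Function intervalIntegral Real

section PartialDerivatives

variable {u : ℝ → ℝ → ℝ}

theorem hasDerivAt_pdt {x t : ℝ} (hu : DifferentiableAt ℝ (uncurry u) (x, t)) :
    HasDerivAt (fun s => u x s) (pdt u x t) t :=
  (hu.comp t ((differentiableAt_const x).prodMk differentiableAt_id)).hasDerivAt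

theorem hasDerivAt_pdx {x t : ℝ} (hu : DifferentiableAt ℝ (uncurry u) (x, t)) :
    HasDerivAt (fun y => u y t) (pdx u x t) x :=
  (hu.comp (f := fun y => (y, t)) x
    (differentiableAt_id.prodMk (differentiableAt_const t))).hasDerivAt

theorem pdt_eq_fderiv {x t : ℝ} (hu : DifferentiableAt ℝ (uncurry u) (x, t)) :
    pdt u x t = fderiv ℝ (uncurry u) (x, t) (0, 1) :=
  (hu.hasFDerivAt.comp_hasDerivAt t ((hasDerivAt_const t x).prodMk (hasDerivAt_id t))).deriv

theorem pdx_eq_fderiv {x t : ℝ} (hu : DifferentiableAt ℝ (uncurry u) (x, t)) :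
    pdx u x t = fderiv ℝ (uncurry u) (x, t) (1, 0) :=
  (hu.hasFDerivAt.comp_hasDerivAt (f := fun y => (y, t)) x
    ((hasDerivAt_id x).prodMk (hasDerivAt_const x t))).deriv

theorem uncurry_pdt_eq (hu : Differentiable ℝ (uncurry u)) :
    uncurry (pdt u) = fun p => fderiv ℝ (uncurry u) p (0, 1) :=
  funext fun p => pdt_eq_fderiv (hu p)

theorem uncurry_pdx_eq (hu : Differentiable ℝ (uncurry u)) :
    uncurry (pdx u) = fun p => fderiv ℝ (uncurry u) p (1, 0) :=
  funext fun p => pdx_eq_fderiv (hu p)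

theorem contDiff_pdt {n : WithTop ℕ∞} (hu : ContDiff ℝ (n + 1) (uncurry u)) :
    ContDiff ℝ n (uncurry (pdt u)) := by
  rw [uncurry_pdt_eq (hu.differentiable (by simp))]
  exact (hu.fderiv_right le_rfl).clm_apply contDiff_const

theorem contDiff_pdx {n : WithTop ℕ∞} (hu : ContDiff ℝ (n + 1) (uncurry u)) :
    ContDiff ℝ n (uncurry (pdx u)) := by
  rw [uncurry_pdx_eq (hu.differentiable (by simp))]
  exact (hu.fderiv_right le_rfl).clm_apply contDiff_const

theorem fderiv_fderiv_apply_apply {E F : Type*} [NormedAddCommGroup E] [NormedSpace ℝ E]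
    [NormedAddCommGroup F] [NormedSpace ℝ F] {f : E → F} {p : E}
    (hf : DifferentiableAt ℝ (fderiv ℝ f) p) (v w : E) :
    fderiv ℝ (fun q => fderiv ℝ f q v) p w = fderiv ℝ (fderiv ℝ f) p w v := by
  rw [fderiv_clm_apply hf (differentiableAt_const v)]
  simp

theorem pdt_pdx_comm (hu : ContDiff ℝ 2 (uncurry u)) : pdt (pdx u) = pdx (pdt u) := by
  have hu₁ : Differentiable ℝ (uncurry u) := hu.differentiable two_ne_zero
  have hu' : Differentiable ℝ (fderiv ℝ (uncurry u)) :=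
    (hu.fderiv_right (m := 1) (by norm_num)).differentiable one_ne_zero
  funext x t
  rw [pdt_eq_fderiv ((contDiff_pdx (n := 1) hu).differentiable one_ne_zero _),
    pdx_eq_fderiv ((contDiff_pdt (n := 1) hu).differentiable one_ne_zero _),
    uncurry_pdx_eq hu₁, uncurry_pdt_eq hu₁, fderiv_fderiv_apply_apply (hu' _),
    fderiv_fderiv_apply_apply (hu' _)]
  exact hu.contDiffAt.isSymmSndFDerivAt (by simp) _ _

end PartialDerivatives

theorem hasDerivAt_intervalIntegral_of_continuous {F F' : ℝ → ℝ → ℝ} {a b : ℝ}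
    (hF : Continuous (uncurry F)) (hF' : Continuous (uncurry F'))
    (hderiv : ∀ x t, HasDerivAt (F x) (F' x t) t) (t : ℝ) :
    HasDerivAt (fun t => ∫ x in a..b, F x t) (∫ x in a..b, F' x t) t := by
  have hF'_int : Continuous fun s => ∫ x in a..b, F' x s :=
    continuous_parametric_intervalIntegral_of_continuous' (f := fun s x => F' x s)
      (hF'.comp continuous_swap) a b
  -- fundamental theorem of calculus in `t` for each `x`, then Fubini
  have hprimitive : ∀ τ, ∫ x in a..b, F x τ =
      (∫ x in a..b, F x 0) + ∫ s in 0..τ, ∫ x in a..b, F' x s := by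
    intro τ
    have hint : MeasureTheory.IntegrableOn (uncurry F') (uIoc a b ×ˢ uIoc 0 τ) :=
      (hF'.continuousOn.integrableOn_compact (isCompact_uIcc.prod isCompact_uIcc)).mono_set
        (prod_mono uIoc_subset_uIcc uIoc_subset_uIcc)
    rw [← MeasureTheory.intervalIntegral_intervalIntegral_swap hint, ← integral_add
      ((hF.uncurry_right 0).intervalIntegrable a b)
      ((continuous_parametric_intervalIntegral_of_continuous' hF' 0 τ).intervalIntegrable a b)]
    refine integral_congr fun x _ => ?_
    rw [integral_eq_sub_of_hasDerivAt (fun s _ => hderiv x s)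
      ((hF'.uncurry_left x).intervalIntegrable 0 τ)]
    ring
  rw [funext hprimitive]
  exact ((hF'_int.integral_hasStrictDerivAt 0 t).hasDerivAt).const_add _

theorem sq_inv_mul_sin_add_mul_sub_sin_le (ε a b : ℝ) :
    (ε⁻¹ * (sin (a + ε * b) - sin a)) ^ 2 ≤ b ^ 2 := by
  rcases eq_or_ne ε 0 with rfl | hε
  · simp [sq_nonneg]
  rw [sq_le_sq, abs_mul]
  calc |ε⁻¹| * |sin (a + ε * b) - sin a| ≤ |ε⁻¹| * |ε * b| := by
        refine mul_le_mul_of_nonneg_left ?_ (abs_nonneg _)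
        simpa using abs_sin_sub_sin_le (a + ε * b) a
    _ = |b| := by rw [← abs_mul, inv_mul_cancel_left₀ hε]

theorem le_exp_mul_mul_add_integral_of_deriv_le {E G : ℝ → ℝ} {K t : ℝ} (hK : 0 ≤ K)
    (ht : 0 ≤ t) (hE : ContinuousOn E (Icc 0 t)) (hE' : DifferentiableOn ℝ E (Ioo 0 t))
    (hG : Continuous G) (hG_nonneg : ∀ s, 0 ≤ G s)
    (hbound : ∀ s ∈ Ioo 0 t, deriv E s ≤ K * E s + G s) :
    E t ≤ exp (K * t) * (E 0 + ∫ s in 0..t, G s) := by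
  have hwG : Continuous fun s => exp (-(K * s)) * G s := by fun_prop
  set F : ℝ → ℝ := fun τ => exp (-(K * τ)) * E τ - ∫ s in 0..τ, exp (-(K * s)) * G s
  have hderiv : ∀ τ ∈ Ioo 0 t,
      HasDerivAt F (exp (-(K * τ)) * (deriv E τ - K * E τ - G τ)) τ := fun τ hτ => by
    have hEτ := ((hE' τ hτ).differentiableAt (Ioo_mem_nhds hτ.1 hτ.2)).hasDerivAt
    have hw : HasDerivAt (fun s => exp (-(K * s))) (exp (-(K * τ)) * -K) τ := by
      simpa using ((hasDerivAt_id τ).const_mul K).fun_neg.exp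
    exact ((hw.mul hEτ).sub (hwG.integral_hasStrictDerivAt 0 τ).hasDerivAt).congr_deriv (by ring)
  have hF : AntitoneOn F (Icc 0 t) := by
    refine antitoneOn_of_deriv_nonpos (convex_Icc 0 t) ?_ ?_ ?_
    · exact ((by fun_prop : Continuous fun τ => exp (-(K * τ))).continuousOn.mul hE).sub
        (continuous_primitive (fun _ _ => hwG.intervalIntegrable _ _) 0).continuousOn
    · rw [interior_Icc]
      exact fun τ hτ => (hderiv τ hτ).differentiableAt.differentiableWithinAt
    · rw [interior_Icc]
      intro τ hτ
      rw [(hderiv τ hτ).deriv]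
      exact mul_nonpos_of_nonneg_of_nonpos (exp_pos _).le (by linarith [hbound τ hτ])
  have hFt : exp (-(K * t)) * E t ≤ E 0 + ∫ s in 0..t, exp (-(K * s)) * G s := by
    have hFt0 := hF ⟨le_rfl, ht⟩ ⟨ht, le_rfl⟩ ht
    simp only [F, mul_zero, neg_zero, exp_zero, one_mul, integral_same, sub_zero] at hFt0
    linarith
  have hweight : ∫ s in 0..t, exp (-(K * s)) * G s ≤ ∫ s in 0..t, G s :=
    integral_mono_on ht (hwG.intervalIntegrable _ _) (hG.intervalIntegrable _ _) fun s hs =>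
      mul_le_of_le_one_left (hG_nonneg s) (exp_le_one_iff.mpr (by nlinarith [hs.1]))
  calc E t = exp (K * t) * (exp (-(K * t)) * E t) := by rw [← mul_assoc, ← exp_add]; simp
    _ ≤ exp (K * t) * (E 0 + ∫ s in 0..t, G s) := by gcongr; linarith

noncomputable def energy (a b : ℝ) (u : ℝ → ℝ → ℝ) (t : ℝ) : ℝ :=
  (∫ x in a..b, pdt u x t ^ 2) + ∫ x in a..b, (u x t ^ 2 + pdx u x t ^ 2)

section Energy

variable {u : ℝ → ℝ → ℝ} {a b : ℝ}

theorem energy_nonneg (hab : a ≤ b) (t : ℝ) : 0 ≤ energy a b u t :=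
  add_nonneg (integral_nonneg hab fun _ _ => sq_nonneg _)
    (integral_nonneg hab fun _ _ => by positivity)

theorem energy_zero_eq {u₀ v₀ : ℝ → ℝ} (hab : a ≤ b)
    (hinit : ∀ x ∈ Icc a b, u x 0 = u₀ x ∧ pdt u x 0 = v₀ x) :
    energy a b u 0 = (∫ x in a..b, v₀ x ^ 2) + ∫ x in a..b, (u₀ x ^ 2 + deriv u₀ x ^ 2) := by
  have hslice : ∀ x ∈ Ioo a b, deriv u₀ x = pdx u x 0 := fun x hx =>
    Filter.EventuallyEq.deriv_eq (Filter.eventually_of_mem (Ioo_mem_nhds hx.1 hx.2)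
      fun y hy => (hinit y (Ioo_subset_Icc_self hy)).1.symm)
  unfold energy
  congr 1 <;> refine integral_congr_Ioo_of_le hab fun x hx => ?_
  · simp only [(hinit x (Ioo_subset_Icc_self hx)).2]
  · simp only [(hinit x (Ioo_subset_Icc_self hx)).1, hslice x hx]

theorem hasDerivAt_energy (hu : ContDiff ℝ 2 (uncurry u)) (t : ℝ) :
    HasDerivAt (energy a b u)
      ((∫ x in a..b, 2 * pdt u x t * pdt (pdt u) x t)
        + ∫ x in a..b, (2 * u x t * pdt u x t + 2 * pdx u x t * pdt (pdx u) x t)) t := by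
  have hut : ContDiff ℝ 1 (uncurry (pdt u)) := contDiff_pdt hu
  have hux : ContDiff ℝ 1 (uncurry (pdx u)) := contDiff_pdx hu
  have hu_c := hu.continuous
  have hut_c := hut.continuous
  have hux_c := hux.continuous
  have hutt_c := (contDiff_pdt (n := 0) hut).continuous
  have huxt_c := (contDiff_pdt (n := 0) hux).continuous
  have kinetic := hasDerivAt_intervalIntegral_of_continuous (a := a) (b := b)
    (F := fun x s => pdt u x s ^ 2) (F' := fun x s => 2 * pdt u x s * pdt (pdt u) x s)
    (by fun_prop) (by fun_prop)
    (fun x s => ((hasDerivAt_pdt (hut.differentiable one_ne_zero (x, s))).fun_pow 2).congr_deriv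
      (by push_cast; ring)) t
  have potential := hasDerivAt_intervalIntegral_of_continuous (a := a) (b := b)
    (F := fun x s => u x s ^ 2 + pdx u x s ^ 2)
    (F' := fun x s => 2 * u x s * pdt u x s + 2 * pdx u x s * pdt (pdx u) x s)
    (by fun_prop) (by fun_prop)
    (fun x s => (((hasDerivAt_pdt (hu.differentiable two_ne_zero (x, s))).fun_pow 2).add
      ((hasDerivAt_pdt (hux.differentiable one_ne_zero (x, s))).fun_pow 2)).congr_deriv
        (by push_cast; ring)) t
  exact kinetic.add potential

theorem integral_pdx_pdt_mul_pdx (hu : ContDiff ℝ 2 (uncurry u)) (t : ℝ) :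
    ∫ x in a..b, (pdx u x t * pdt (pdx u) x t + pdt u x t * pdx (pdx u) x t) =
      pdt u b t * pdx u b t - pdt u a t * pdx u a t := by
  have hut : ContDiff ℝ 1 (uncurry (pdt u)) := contDiff_pdt hu
  have hux : ContDiff ℝ 1 (uncurry (pdx u)) := contDiff_pdx hu
  have hut_c := hut.continuous
  have hux_c := hux.continuous
  have huxt_c := (contDiff_pdt (n := 0) hux).continuous
  have huxx_c := (contDiff_pdx (n := 0) hux).continuous
  refine integral_eq_sub_of_hasDerivAt (f := fun x => pdt u x t * pdx u x t)
    (fun x _ => ?_) (Continuous.intervalIntegrable (by fun_prop) _ _)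
  rw [pdt_pdx_comm hu]
  exact ((hasDerivAt_pdx (hut.differentiable one_ne_zero (x, t))).mul
    (hasDerivAt_pdx (hux.differentiable one_ne_zero (x, t)))).congr_deriv (by ring)

theorem deriv_energy_of_wave (hu : ContDiff ℝ 2 (uncurry u)) (hab : a ≤ b) {s : ℝ}
    {f : ℝ → ℝ} (hf : Continuous f)
    (hwave : ∀ x ∈ Ioo a b, pdt (pdt u) x s - pdx (pdx u) x s = f x) :
    deriv (energy a b u) s = 2 * (pdt u b s * pdx u b s - pdt u a s * pdx u a s)
      + ∫ x in a..b, 2 * pdt u x s * (u x s + f x) := by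
  have hut : ContDiff ℝ 1 (uncurry (pdt u)) := contDiff_pdt hu
  have hux : ContDiff ℝ 1 (uncurry (pdx u)) := contDiff_pdx hu
  have hu_c := hu.continuous
  have hut_c := hut.continuous
  have hux_c := hux.continuous
  have huxt_c := (contDiff_pdt (n := 0) hux).continuous
  have huxx_c := (contDiff_pdx (n := 0) hux).continuous
  have hkinetic : ∫ x in a..b, 2 * pdt u x s * pdt (pdt u) x s
      = ∫ x in a..b, 2 * pdt u x s * (pdx (pdx u) x s + f x) :=
    integral_congr_Ioo_of_le hab fun x hx => by rw [← hwave x hx]; ring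
  calc deriv (energy a b u) s
      = (∫ x in a..b, 2 * pdt u x s * (pdx (pdx u) x s + f x))
        + ∫ x in a..b, (2 * u x s * pdt u x s + 2 * pdx u x s * pdt (pdx u) x s) := by
        rw [(hasDerivAt_energy hu s).deriv, hkinetic]
    _ = ∫ x in a..b, (2 * (pdx u x s * pdt (pdx u) x s + pdt u x s * pdx (pdx u) x s)
        + 2 * pdt u x s * (u x s + f x)) := by
        rw [← integral_add]
        · exact integral_congr fun x _ => by ring
        all_goals exact Continuous.intervalIntegrable (by fun_prop) _ _
    _ = _ := by
        rw [integral_add, integral_const_mul, integral_pdx_pdt_mul_pdx hu]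
        all_goals exact Continuous.intervalIntegrable (by fun_prop) _ _

theorem pdt_mul_pdx_eq_zero {y s T : ℝ} (hs : s ∈ Ioo 0 T)
    (hbc : (∀ t ∈ Icc 0 T, pdx u y t = 0) ∨ (∀ t ∈ Icc 0 T, u y t = 0)) :
    pdt u y s * pdx u y s = 0 := by
  rcases hbc with hneumann | hdirichlet
  · rw [hneumann s (Ioo_subset_Icc_self hs), mul_zero]
  · have hzero : (fun t => u y t) =ᶠ[nhds s] fun _ => 0 :=
      Filter.eventually_of_mem (Ioo_mem_nhds hs.1 hs.2)
        fun t ht => hdirichlet t (Ioo_subset_Icc_self ht)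
    rw [pdt, hzero.deriv_eq, deriv_const, zero_mul]

theorem deriv_energy_le_of_sineGordon (hu : ContDiff ℝ 2 (uncurry u)) (hab : a ≤ b) {s ε : ℝ}
    {φ g : ℝ → ℝ} (hφ : Continuous φ) (hg : Continuous g)
    (heq : ∀ x ∈ Ioo a b, pdt (pdt u) x s - pdx (pdx u) x s
      + ε⁻¹ * (sin (φ x + ε * u x s) - sin (φ x)) = g x)
    (ha : pdt u a s * pdx u a s = 0) (hb : pdt u b s * pdx u b s = 0) :
    deriv (energy a b u) s ≤ 3 * energy a b u s + ∫ x in a..b, g x ^ 2 := by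
  have hu_c := hu.continuous
  have hut_c := (contDiff_pdt (n := 1) hu).continuous
  have hux_c := (contDiff_pdx (n := 1) hu).continuous
  set N : ℝ → ℝ := fun x => ε⁻¹ * (sin (φ x + ε * u x s) - sin (φ x))
  have hN_c : Continuous N := by fun_prop
  rw [deriv_energy_of_wave hu hab (f := fun x => g x - N x) (by fun_prop)
    (fun x hx => by linarith [heq x hx]), ha, hb, sub_self, mul_zero, zero_add]
  calc ∫ x in a..b, 2 * pdt u x s * (u x s + (g x - N x))
      ≤ ∫ x in a..b, (3 * pdt u x s ^ 2 + 3 * (u x s ^ 2 + pdx u x s ^ 2) + g x ^ 2) := by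
        refine integral_mono_on hab (Continuous.intervalIntegrable (by fun_prop) _ _)
          (Continuous.intervalIntegrable (by fun_prop) _ _) fun x _ => ?_
        have hN := sq_inv_mul_sin_add_mul_sub_sin_le ε (φ x) (u x s)
        nlinarith [sq_nonneg (pdt u x s - u x s), sq_nonneg (pdt u x s - g x),
          sq_nonneg (pdt u x s + N x), sq_nonneg (pdx u x s)]
    _ = 3 * energy a b u s + ∫ x in a..b, g x ^ 2 := by
        rw [integral_add, integral_add, integral_const_mul, integral_const_mul, energy]
        · ring
        all_goals exact Continuous.intervalIntegrable (by fun_prop) _ _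

end Energy

theorem energy_estimate_general (T : ℝ) :
    ∃ c > 0, ∀ (L ε : ℝ) (φ g η : ℝ → ℝ → ℝ) (u₀ v₀ : ℝ → ℝ),
      0 < L → 0 < ε → ε ≤ 1 →
      Continuous (Function.uncurry φ) → Continuous (Function.uncurry g) →
      ContDiff ℝ 2 (Function.uncurry η) →
      (∀ x ∈ Ioo (-L) L, ∀ t ∈ Ioo (0 : ℝ) T,
        pdt (pdt η) x t - pdx (pdx η) x t
          + ε⁻¹ * (Real.sin (φ x t + ε * η x t) - Real.sin (φ x t)) = g x t) →
      ((∀ t ∈ Icc (0 : ℝ) T, pdx η (-L) t = 0 ∧ pdx η L t = 0) ∨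
       (∀ t ∈ Icc (0 : ℝ) T, η (-L) t = 0 ∧ η L t = 0)) →
      (∀ x ∈ Icc (-L) L, η x 0 = u₀ x ∧ pdt η x 0 = v₀ x) →
      ∀ t ∈ Icc (0 : ℝ) T,
        (∫ x in (-L)..L, (pdt η x t) ^ 2)
            + (∫ x in (-L)..L, ((η x t) ^ 2 + (pdx η x t) ^ 2)) ≤
          c * ((∫ x in (-L)..L, (v₀ x) ^ 2)
              + (∫ x in (-L)..L, ((u₀ x) ^ 2 + (deriv u₀ x) ^ 2))
              + ∫ s in (0 : ℝ)..t, ∫ x in (-L)..L, (g x s) ^ 2) := by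
  refine ⟨exp (3 * T), exp_pos _, fun L ε φ g η u₀ v₀ hL _ _ hφ hg hη heq hbc hinit t ht => ?_⟩
  have hLL : -L ≤ L := by linarith
  have hdiff : Differentiable ℝ (energy (-L) L η) := fun s =>
    (hasDerivAt_energy hη s).differentiableAt
  have hbound : ∀ s ∈ Ioo 0 t,
      deriv (energy (-L) L η) s ≤ 3 * energy (-L) L η s + ∫ x in (-L)..L, g x s ^ 2 :=
    fun s hs =>
    have hs' : s ∈ Ioo 0 T := ⟨hs.1, hs.2.trans_le ht.2⟩
    deriv_energy_le_of_sineGordon hη hLL (hφ.uncurry_right s) (hg.uncurry_right s)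
      (fun x hx => heq x hx s hs')
      (pdt_mul_pdx_eq_zero hs' (hbc.imp (fun h τ hτ => (h τ hτ).1) fun h τ hτ => (h τ hτ).1))
      (pdt_mul_pdx_eq_zero hs' (hbc.imp (fun h τ hτ => (h τ hτ).2) fun h τ hτ => (h τ hτ).2))
  have hforcing_nonneg : 0 ≤ ∫ s in 0..t, ∫ x in (-L)..L, g x s ^ 2 :=
    integral_nonneg ht.1 fun s _ => integral_nonneg hLL fun _ _ => sq_nonneg _
  calc energy (-L) L η t
      ≤ exp (3 * t) * (energy (-L) L η 0 + ∫ s in 0..t, ∫ x in (-L)..L, g x s ^ 2) :=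
        le_exp_mul_mul_add_integral_of_deriv_le (by norm_num) ht.1
          hdiff.continuous.continuousOn hdiff.differentiableOn
          (continuous_parametric_intervalIntegral_of_continuous' (by fun_prop) _ _)
          (fun s => integral_nonneg hLL fun _ _ => sq_nonneg _) hbound
    _ ≤ exp (3 * T) * (energy (-L) L η 0 + ∫ s in 0..t, ∫ x in (-L)..L, g x s ^ 2) := by
        gcongr
        · exact add_nonneg (energy_nonneg hLL 0) hforcing_nonneg
        · exact ht.2
    _ = _ := by rw [energy_zero_eq hLL hinit]

/-- Energy estimate for the perturbation equation around a soliton profile: for `T > 0`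
there is a constant `c > 0` depending only on `T` such that any `C²` solution `η` of
`η_tt − η_xx + ε⁻¹(sin(φ + ε η) − sin φ) = g` on `(−L,L) × (0,T)` with Neumann (or
Dirichlet) boundary conditions and initial data `u₀, v₀` satisfies, for all `t ∈ [0,T]`,
`∫ η_t² + ∫ (η² + η_x²) ≤ c (∫ v₀² + ∫ (u₀² + u₀'²) + ∫₀ᵗ ∫ g²)`. -/
theorem energy_estimate (T : ℝ) (hT : 0 < T) :
    ∃ c > 0, ∀ (L ε : ℝ) (φ g η : ℝ → ℝ → ℝ) (u₀ v₀ : ℝ → ℝ),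
      0 < L → 0 < ε → ε ≤ 1 →
      Continuous (Function.uncurry φ) → Continuous (Function.uncurry g) →
      ContDiff ℝ 2 (Function.uncurry η) →
      (∀ x ∈ Ioo (-L) L, ∀ t ∈ Ioo (0 : ℝ) T,
        pdt (pdt η) x t - pdx (pdx η) x t
          + ε⁻¹ * (Real.sin (φ x t + ε * η x t) - Real.sin (φ x t)) = g x t) →
      ((∀ t ∈ Icc (0 : ℝ) T, pdx η (-L) t = 0 ∧ pdx η L t = 0) ∨
       (∀ t ∈ Icc (0 : ℝ) T, η (-L) t = 0 ∧ η L t = 0)) →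
      (∀ x ∈ Icc (-L) L, η x 0 = u₀ x ∧ pdt η x 0 = v₀ x) →
      ∀ t ∈ Icc (0 : ℝ) T,
        (∫ x in (-L)..L, (pdt η x t) ^ 2)
            + (∫ x in (-L)..L, ((η x t) ^ 2 + (pdx η x t) ^ 2)) ≤
          c * ((∫ x in (-L)..L, (v₀ x) ^ 2)
              + (∫ x in (-L)..L, ((u₀ x) ^ 2 + (deriv u₀ x) ^ 2))
              + ∫ s in (0 : ℝ)..t, ∫ x in (-L)..L, (g x s) ^ 2) :=
  energy_estimate_general T
end
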